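/- Let O and Ô be direction-consistent orientations and write Δ = Δ_{O,Ô}. Let σ : ℂ → ℂ be an arbitrary function applied entrywise; let h₁ : ℂ^{V×d_i} → ℂ^{V×k₁} and h₂ : ℂ^{V×d_e} → ℂ^{V×k₂} be arbitrary functions, and W₁ ∈ ℂ^{k₁×d'}, W₂ ∈ ℂ^{k₂×d'}, W₃ ∈ ℂ^{d_i×d'}. For X ∈ ℂ^{E×d_e} and Y ∈ ℂ^{E×d_i} define Z(X, Y, O) = σ( (B_inv)ᴴ · h₁(B_inv · Y) · W₁ + (B_inv)ᴴ · h₂(B_equ(O) · X) · W₂ + Y · W₃ ). Then Z(Δ · X, Y, Ô) = Z(X, Y, O); that is, the invariant EIGN convolution layer is jointly orientation-invariant. -/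
import Mathlib


open Matrix

/-- `O` assigns to each edge either its endpoint pair `(s e, t e)` or the reversed pair. -/
def IsOrientation {V E : Type*} (s t : E → V) (O : E → V × V) : Prop :=
  ∀ e, O e = (s e, t e) ∨ O e = (t e, s e)

/-- A direction-consistent orientation: an orientation which agrees with the direction
`(s e, t e)` on every directed edge. -/
def DirConsistent {V E : Type*} (s t : E → V) (dir : E → Bool) (O : E → V × V) : Prop :=
  IsOrientation s t O ∧ ∀ e, dir e = true → O e = (s e, t e)

/-- The magnetic equivariant boundary operator. -/
noncomputable def Bequ {V E : Type*} [DecidableEq V] (q : ℝ) (s t : E → V) (dir : E → Bool)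
    (O : E → V × V) : Matrix V E ℂ :=
  Matrix.of fun v e =>
    if dir e then
      if v = s e then -Complex.exp (Complex.I * (Real.pi * q : ℂ))
      else if v = t e then Complex.exp (-(Complex.I * (Real.pi * q : ℂ)))
      else 0
    else
      if v = (O e).1 then -1
      else if v = (O e).2 then 1
      else 0

/-- The magnetic invariant boundary operator. -/
noncomputable def Binv {V E : Type*} [DecidableEq V] (q : ℝ) (s t : E → V) (dir : E → Bool) :
    Matrix V E ℂ :=
  Matrix.of fun v e =>
    if dir e then
      if v = s e then Complex.exp (Complex.I * (Real.pi * q : ℂ))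
      else if v = t e then Complex.exp (-(Complex.I * (Real.pi * q : ℂ)))
      else 0
    else
      if v = s e ∨ v = t e then 1 else 0

/-- The orientation-change matrix `Δ_{O,Ô}`. -/
noncomputable def Delta {V E : Type*} [DecidableEq V] [DecidableEq E] (O Ohat : E → V × V) :
    Matrix E E ℂ :=
  Matrix.diagonal fun e => if O e = Ohat e then 1 else -1

lemma Bequ_mul_Delta {V E : Type*} [Fintype E] [DecidableEq V] [DecidableEq E]
    (q : ℝ) (s t : E → V) (hst : ∀ e, s e ≠ t e) (dir : E → Bool)
    (O Ohat : E → V × V)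
    (hO : DirConsistent s t dir O) (hOhat : DirConsistent s t dir Ohat) :
    Bequ q s t dir Ohat * Delta O Ohat = Bequ q s t dir O := by
  ext v e
  rw [Delta, Matrix.mul_diagonal]
  by_cases h : O e = Ohat e
  · simp [Bequ, h]
  · have hd : dir e = false := by
      cases hde : dir e
      · rfl
      · exact absurd ((hO.2 e hde).trans (hOhat.2 e hde).symm) h
    simp only [if_neg h, mul_neg_one]
    rcases hO.1 e with h1 | h1 <;> rcases hOhat.1 e with h2 | h2 <;>
      first
        | exact absurd (h1.trans h2.symm) h
        | · simp only [Bequ, Matrix.of_apply, hd, Bool.false_eq_true, if_false, h1, h2]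
            by_cases hv1 : v = s e <;> by_cases hv2 : v = t e <;>
              simp_all [hst e, (hst e).symm]

/-- The invariant EIGN convolution layer
`Z(X, Y, O) = σ((B_inv)ᴴ h₁(B_inv Y) W₁ + (B_inv)ᴴ h₂(B_equ(O) X) W₂ + Y W₃)`
is jointly orientation-invariant: `Z(Δ·X, Y, Ô) = Z(X, Y, O)`. -/
theorem eign_invariant_convolution_layer
    {V E de di k₁ k₂ d' : Type*} [Fintype V] [Fintype E] [DecidableEq V] [DecidableEq E]
    [Fintype de] [Fintype di] [Fintype k₁] [Fintype k₂]
    (q : ℝ) (s t : E → V) (hst : ∀ e, s e ≠ t e) (dir : E → Bool)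
    (O Ohat : E → V × V)
    (hO : DirConsistent s t dir O) (hOhat : DirConsistent s t dir Ohat)
    (σ : ℂ → ℂ)
    (h₁ : Matrix V di ℂ → Matrix V k₁ ℂ) (h₂ : Matrix V de ℂ → Matrix V k₂ ℂ)
    (W₁ : Matrix k₁ d' ℂ) (W₂ : Matrix k₂ d' ℂ) (W₃ : Matrix di d' ℂ)
    (X : Matrix E de ℂ) (Y : Matrix E di ℂ) :
    ((Binv q s t dir)ᴴ * h₁ (Binv q s t dir * Y) * W₁
      + (Binv q s t dir)ᴴ * h₂ (Bequ q s t dir Ohat * (Delta O Ohat * X)) * W₂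
      + Y * W₃).map σ
    = ((Binv q s t dir)ᴴ * h₁ (Binv q s t dir * Y) * W₁
      + (Binv q s t dir)ᴴ * h₂ (Bequ q s t dir O * X) * W₂
      + Y * W₃).map σ := by
  rw [← Matrix.mul_assoc, Bequ_mul_Delta q s t hst dir O Ohat hO hOhat]
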